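/- arXiv:1704.05925 — 2 statements merged into one kernel-verified Lean document; each statement's English description precedes it below -/
import Mathlib

section
/- Let S be a sentential logic with DN-term m. Then for all formulas: (1) m^n(φ₀,…,φ_n,ψ) ⊢_S φ_i ∨ ψ for each i ≤ n; (2) φ₀∨ψ, …, φ_n∨ψ ⊢_S m^n(φ₀,…,φ_n,ψ); (3) if m^n(φ₀,…,φ_n,φ) ⊢_S φ then φ₀,…,φ_n ⊢_S φ; (4) φ ⊢_S m^n(φ₀,…,φ_n,φ). -/
variable {Fm : Type*}

/-- The term `x ∨ y := m(x,x,y)`. -/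
def supT (mt : Fm → Fm → Fm → Fm) (x y : Fm) : Fm := mt x x y

/-- `mN mt [φ₀,…,φₙ] ψ = mⁿ(φ₀,…,φₙ,ψ)`. -/
def mN (mt : Fm → Fm → Fm → Fm) : List Fm → Fm → Fm
  | [], b => b
  | a :: t, b => t.foldl (fun acc x => mt acc x b) (mt a a b)

/-- Structural properties of a consequence relation: reflexivity, monotonicity, cut. -/
def IsConsequence (E : Set Fm → Fm → Prop) : Prop :=
  (∀ Γ φ, φ ∈ Γ → E Γ φ) ∧
  (∀ Γ Δ φ, E Γ φ → Γ ⊆ Δ → E Δ φ) ∧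
  (∀ Γ Δ φ, E Γ φ → (∀ γ ∈ Γ, E Δ γ) → E Δ φ)

/-- `mt` is a DN-term of the logic `E`: conditions (A1)-(A4). -/
def IsDNTerm (E : Set Fm → Fm → Prop) (mt : Fm → Fm → Fm → Fm) : Prop :=
  (∀ φ ψ χ, E {supT mt φ ψ} χ ↔ E {φ} χ ∧ E {ψ} χ) ∧
  (∀ φ ψ χ, E {mt φ ψ χ} (supT mt φ χ) ∧ E {mt φ ψ χ} (supT mt ψ χ)) ∧
  (∀ φ ψ χ, E {supT mt φ χ, supT mt ψ χ} (mt φ ψ χ)) ∧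
  (∀ (l : List Fm) φ, l ≠ [] → E {x | x ∈ l} φ → E {mN mt l φ} φ)

/-- The Frege (interderivability) relation of the logic `E`. -/
def Lam (E : Set Fm → Fm → Prop) (φ ψ : Fm) : Prop := E {φ} ψ ∧ E {ψ} φ

/-! All four properties go by induction along
`mⁿ(φ₀,…,φₙ,ψ) = m(mⁿ⁻¹(φ₀,…,φₙ₋₁,ψ), φₙ, ψ)`. The central fact is that
`Γ ⊢ mⁿ(φ₀,…,φₙ,ψ)` as soon as `Γ ⊢ φᵢ ∨ ψ` for every `i`, by (A3) and `M ⊢ M ∨ ψ`.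
It gives (2) directly, (4) because `ψ ⊢ φᵢ ∨ ψ`, and (3) because `φᵢ ⊢ φᵢ ∨ φ`,
so that `φ₀,…,φₙ ⊢ mⁿ(φ₀,…,φₙ,φ) ⊢ φ`. -/

@[elab_as_elim]
theorem List.induction_ne_nil_append_singleton {α : Type*}
    {motive : (l : List α) → l ≠ [] → Prop}
    (singleton : ∀ a, motive [a] (List.cons_ne_nil a []))
    (append_singleton : ∀ l a (hl : l ≠ []), motive l hl →
      motive (l ++ [a]) (List.concat_ne_nil a l))
    (l : List α) (hl : l ≠ []) : motive l hl := by
  induction l using List.reverseRecOn with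
  | nil => exact absurd rfl hl
  | append_singleton l a ih =>
    rcases eq_or_ne l [] with rfl | hl'
    · exact singleton a
    · exact append_singleton l a hl' (ih hl')

section DNTerm

variable {E : Set Fm → Fm → Prop} {mt : Fm → Fm → Fm → Fm} {Γ : Set Fm} {φ ψ χ : Fm}

theorem mN_singleton (a b : Fm) : mN mt [a] b = supT mt a b := rfl

theorem mN_append_singleton {l : List Fm} (hl : l ≠ []) (x b : Fm) :
    mN mt (l ++ [x]) b = mt (mN mt l b) x b := by
  obtain ⟨a, t, rfl⟩ := List.exists_cons_of_ne_nil hl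
  simp [mN, List.foldl_append]

namespace IsConsequence

theorem of_mem (hE : IsConsequence E) (h : φ ∈ Γ) : E Γ φ := hE.1 Γ φ h

theorem trans (hE : IsConsequence E) (h₁ : E Γ φ) (h₂ : E {φ} ψ) : E Γ ψ :=
  hE.2.2 {φ} Γ ψ h₂ (by rintro γ rfl; exact h₁)

end IsConsequence

namespace IsDNTerm

theorem supT_entails (h : IsDNTerm E mt) (h₁ : E {φ} χ) (h₂ : E {ψ} χ) :
    E {supT mt φ ψ} χ :=
  (h.1 φ ψ χ).2 ⟨h₁, h₂⟩

theorem entails_supT_left (hE : IsConsequence E) (h : IsDNTerm E mt) :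
    E {φ} (supT mt φ ψ) :=
  ((h.1 φ ψ _).1 (hE.of_mem rfl)).1

theorem entails_supT_right (hE : IsConsequence E) (h : IsDNTerm E mt) :
    E {ψ} (supT mt φ ψ) :=
  ((h.1 φ ψ _).1 (hE.of_mem rfl)).2

theorem supT_of_entails_left (hE : IsConsequence E) (h : IsDNTerm E mt) (hφ : E Γ φ) :
    E Γ (supT mt φ ψ) :=
  hE.trans hφ (entails_supT_left hE h)

theorem mt_of_entails_supT (hE : IsConsequence E) (h : IsDNTerm E mt)
    (h₁ : E Γ (supT mt φ χ)) (h₂ : E Γ (supT mt ψ χ)) :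
    E Γ (mt φ ψ χ) :=
  hE.2.2 _ Γ _ (h.2.2.1 φ ψ χ) (by rintro γ (rfl | rfl) <;> assumption)

theorem mN_entails_supT (hE : IsConsequence E) (h : IsDNTerm E mt) {l : List Fm} (hl : l ≠ [])
    (hφ : φ ∈ l) :
    E {mN mt l ψ} (supT mt φ ψ) := by
  induction l, hl using List.induction_ne_nil_append_singleton with
  | singleton a =>
    rw [List.mem_singleton.mp hφ, mN_singleton]
    exact hE.of_mem rfl
  | append_singleton l x hl ih =>
    rw [mN_append_singleton hl]
    rcases List.mem_append.mp hφ with hφ | hφ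
    · -- `m(M, x, ψ) ⊢ M ∨ ψ ⊢ φ ∨ ψ`, where `M = mⁿ⁻¹(l, ψ)`
      exact hE.trans (h.2.1 _ x ψ).1 (supT_entails h (ih hφ) (entails_supT_right hE h))
    · rw [List.mem_singleton.mp hφ]
      exact (h.2.1 _ x ψ).2

theorem entails_mN (hE : IsConsequence E) (h : IsDNTerm E mt) {l : List Fm} (hl : l ≠ [])
    (hΓ : ∀ φ ∈ l, E Γ (supT mt φ ψ)) :
    E Γ (mN mt l ψ) := by
  induction l, hl using List.induction_ne_nil_append_singleton with
  | singleton a =>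
    rw [mN_singleton]
    exact hΓ a (List.mem_singleton_self a)
  | append_singleton l x hl ih =>
    rw [mN_append_singleton hl]
    refine mt_of_entails_supT hE h (supT_of_entails_left hE h (ih fun φ hφ => ?_)) ?_
    · exact hΓ φ (List.mem_append_left _ hφ)
    · exact hΓ x (List.mem_append_right _ (List.mem_singleton_self x))

end IsDNTerm

end DNTerm

/-- Basic consequences of having a DN-term: properties (1)-(4) of
Proposition 3.2. -/
theorem stmt17 (E : Set Fm → Fm → Prop) (hE : IsConsequence E)
    (mt : Fm → Fm → Fm → Fm) (h : IsDNTerm E mt) :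
    (∀ (l : List Fm) (ψ : Fm), l ≠ [] →
      ∀ φ ∈ l, E {mN mt l ψ} (supT mt φ ψ)) ∧
    (∀ (l : List Fm) (ψ : Fm), l ≠ [] →
      E {x | ∃ φ ∈ l, x = supT mt φ ψ} (mN mt l ψ)) ∧
    (∀ (l : List Fm) (φ : Fm), l ≠ [] →
      E {mN mt l φ} φ → E {x | x ∈ l} φ) ∧
    (∀ (l : List Fm) (φ : Fm), l ≠ [] → E {φ} (mN mt l φ)) := by
  refine ⟨fun l ψ hl φ hφ => h.mN_entails_supT hE hl hφ, fun l ψ hl => ?_,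
    fun l φ hl hmN => ?_, fun l φ hl => ?_⟩
  · exact h.entails_mN hE hl fun φ hφ => hE.of_mem ⟨φ, hφ, rfl⟩
  · exact hE.trans (h.entails_mN hE hl fun ψ hψ => h.supT_of_entails_left hE (hE.of_mem hψ)) hmN
  · exact h.entails_mN hE hl fun ψ _ => h.entails_supT_right hE
end

section
/- Let S be a selfextensional sentential logic with a DN-term m. Then the quotient algebra Fm* = Fm/Λ(S) of the formula algebra by the interderivability (Frege) relation, with induced ternary operation m*, is a distributive nearlattice. -/
variable {Fm : Type*}

section Aux

variable {Fm : Type*} {E : Set Fm → Fm → Prop} {mt : Fm → Fm → Fm → Fm}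

private lemma dnRefl (hE : IsConsequence E) (a : Fm) : E {a} a := hE.1 _ _ rfl

/-- cut with a single intermediate formula -/
private lemma cutS (hE : IsConsequence E) {Δ : Set Fm} {c d : Fm}
    (h1 : E {c} d) (h2 : E Δ c) : E Δ d := by
  refine hE.2.2 {c} Δ d h1 ?_
  intro γ hγ
  rw [Set.mem_singleton_iff] at hγ; subst hγ; exact h2

private lemma cut1 (hE : IsConsequence E) {a b c : Fm}
    (h1 : E {a} b) (h2 : E {b} c) : E {a} c := cutS hE h2 h1

/-- cut with two intermediate formulas -/
private lemma cut2 (hE : IsConsequence E) {Δ : Set Fm} {c1 c2 d : Fm}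
    (h0 : E {c1, c2} d) (h1 : E Δ c1) (h2 : E Δ c2) : E Δ d := by
  refine hE.2.2 {c1, c2} Δ d h0 ?_
  intro γ hγ
  simp only [Set.mem_insert_iff, Set.mem_singleton_iff] at hγ
  rcases hγ with rfl | rfl
  · exact h1
  · exact h2

private lemma leSupL (h : IsDNTerm E mt) (hE : IsConsequence E) (a b : Fm) :
    E {a} (supT mt a b) := ((h.1 a b _).mp (dnRefl hE _)).1

private lemma leSupR (h : IsDNTerm E mt) (hE : IsConsequence E) (a b : Fm) :
    E {b} (supT mt a b) := ((h.1 a b _).mp (dnRefl hE _)).2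

private lemma supLe (h : IsDNTerm E mt) {a b c : Fm}
    (h1 : E {a} c) (h2 : E {b} c) : E {supT mt a b} c := (h.1 a b c).mpr ⟨h1, h2⟩

private lemma mLe1 (h : IsDNTerm E mt) (a b c : Fm) :
    E {mt a b c} (supT mt a c) := (h.2.1 a b c).1

private lemma mLe2 (h : IsDNTerm E mt) (a b c : Fm) :
    E {mt a b c} (supT mt b c) := (h.2.1 a b c).2

/-- glb introduction: anything below `a∨c` and `b∨c` is below `m a b c`. -/
private lemma leM (h : IsDNTerm E mt) (hE : IsConsequence E) {t a b c : Fm}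
    (h1 : E {t} (supT mt a c)) (h2 : E {t} (supT mt b c)) : E {t} (mt a b c) :=
  cut2 hE (h.2.2.1 a b c) h1 h2

/-- `c ≤ m a b c`. -/
private lemma leMBase (h : IsDNTerm E mt) (hE : IsConsequence E) (a b c : Fm) :
    E {c} (mt a b c) := leM h hE (leSupR h hE a c) (leSupR h hE b c)

/-- weakening from `{a}` to `{a,b}`. -/
private lemma pairL (hE : IsConsequence E) {a c : Fm} (b : Fm) (h1 : E {a} c) :
    E {a, b} c := hE.2.1 {a} {a, b} c h1 (by
      intro t ht; rw [Set.mem_singleton_iff] at ht; subst ht; exact Set.mem_insert _ _)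

/-- weakening from `{b}` to `{a,b}`. -/
private lemma pairR (hE : IsConsequence E) {b c : Fm} (a : Fm) (h1 : E {b} c) :
    E {a, b} c := hE.2.1 {b} {a, b} c h1 (by
      intro t ht; rw [Set.mem_singleton_iff] at ht; subst ht
      exact Set.mem_insert_iff.mpr (Or.inr rfl))

/-- `{a, b} ⊢ m a b d` for any `d`. -/
private lemma pairM (h : IsDNTerm E mt) (hE : IsConsequence E) (a b d : Fm) :
    E {a, b} (mt a b d) :=
  cut2 hE (h.2.2.1 a b d) (pairL hE b (leSupL h hE a d)) (pairR hE a (leSupL h hE b d))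

/-- (A4) specialized to a two-element list. -/
private lemma a4Pair (h : IsDNTerm E mt) {a b c : Fm} (hab : E {a, b} c) :
    E {mt (supT mt a c) b c} c := by
  have hset : ({x | x ∈ [a, b]} : Set Fm) = {a, b} := by
    ext t; simp [Set.mem_insert_iff]
  have := h.2.2.2 [a, b] c (by simp) (by rw [hset]; exact hab)
  exact this

end Aux

/-- For a selfextensional logic with a DN-term, the quotient of the formula algebra
by the Frege relation is a distributive nearlattice: the identities (P1)-(P3) hold
modulo interderivability. -/
theorem stmt18 (E : Set Fm → Fm → Prop) (hE : IsConsequence E)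
    (mt : Fm → Fm → Fm → Fm) (h : IsDNTerm E mt)
    (hcong : ∀ a a' b b' c c', Lam E a a' → Lam E b b' → Lam E c c' →
      Lam E (mt a b c) (mt a' b' c')) :
    (∀ x y, Lam E (mt x y x) x) ∧
    (∀ x y z u w,
      Lam E (mt (mt x y z) (mt y (mt u x z) z) w)
            (mt w w (mt y (mt x u z) z))) ∧
    (∀ x y z w,
      Lam E (mt x (mt y y z) w)
            (mt (mt x y w) (mt x y w) (mt x z w))) := by
  refine ⟨?p1, ?p2, ?p3⟩
  case p1 =>
    intro x y
    constructor
    · -- m x y x ⊢ x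
      exact cut1 hE (mLe1 h x y x) (supLe h (dnRefl hE x) (dnRefl hE x))
    · -- x ⊢ m x y x
      exact leM h hE (leSupL h hE x x) (leSupR h hE y x)
  case p2 =>
    intro x y z u w
    set A := mt x y z with hA
    set C := mt u x z with hC
    set B := mt y C z with hB
    set C' := mt x u z with hC'
    set B' := mt y C' z with hB'
    -- B ≤ x∨z, u∨z, y∨z  (and same for B')
    have hCz_xz : E {supT mt C z} (supT mt x z) :=
      supLe h (mLe2 h u x z) (leSupR h hE x z)
    have hCz_uz : E {supT mt C z} (supT mt u z) :=
      supLe h (mLe1 h u x z) (leSupR h hE u z)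
    have hC'z_xz : E {supT mt C' z} (supT mt x z) :=
      supLe h (mLe1 h x u z) (leSupR h hE x z)
    have hC'z_uz : E {supT mt C' z} (supT mt u z) :=
      supLe h (mLe2 h x u z) (leSupR h hE u z)
    have hB_yz : E {B} (supT mt y z) := mLe1 h y C z
    have hB_xz : E {B} (supT mt x z) := cut1 hE (mLe2 h y C z) hCz_xz
    have hB_uz : E {B} (supT mt u z) := cut1 hE (mLe2 h y C z) hCz_uz
    have hB'_yz : E {B'} (supT mt y z) := mLe1 h y C' z
    have hB'_xz : E {B'} (supT mt x z) := cut1 hE (mLe2 h y C' z) hC'z_xz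
    have hB'_uz : E {B'} (supT mt u z) := cut1 hE (mLe2 h y C' z) hC'z_uz
    -- B ≤ B' and B' ≤ B
    have hBB' : E {B} B' := by
      refine leM h hE hB_yz ?_
      -- B ≤ C' ∨ z, via B ≤ C'
      have hBC' : E {B} C' := leM h hE hB_xz hB_uz
      exact cut1 hE hBC' (leSupL h hE C' z)
    have hB'B : E {B'} B := by
      refine leM h hE hB'_yz ?_
      have hB'C : E {B'} C := leM h hE hB'_uz hB'_xz
      exact cut1 hE hB'C (leSupL h hE C z)
    -- B' ≤ A
    have hB'A : E {B'} A := leM h hE hB'_xz hB'_yz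
    constructor
    · -- m A B w ⊢ w ∨ B'  (note mt w w B' = supT mt w B')
      have h1 : E {mt A B w} (supT mt B w) := mLe2 h A B w
      have h2 : E {supT mt B w} (supT mt w B') :=
        supLe h (cut1 hE hBB' (leSupR h hE w B')) (leSupL h hE w B')
      exact cut1 hE h1 h2
    · -- w ∨ B' ⊢ m A B w
      refine supLe h (leMBase h hE A B w) ?_
      refine leM h hE ?_ ?_
      · exact cut1 hE hB'A (leSupL h hE A w)
      · exact cut1 hE hB'B (leSupL h hE B w)
  case p3 =>
    intro x y z w
    set s := mt y y z with hs   -- s = supT mt y z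
    set L := mt x s w with hL
    set t1 := mt x y w with ht1
    set t2 := mt x z w with ht2
    set φ := mt t1 t1 t2 with hφ  -- φ = supT mt t1 t2
    have hsup_s : s = supT mt y z := rfl
    have hsup_φ : φ = supT mt t1 t2 := rfl
    have ht1φ : E {t1} φ := leSupL h hE t1 t2
    have ht2φ : E {t2} φ := leSupR h hE t1 t2
    have hwφ : E {w} φ := cut1 hE (leMBase h hE x y w) ht1φ
    constructor
    · -- L ⊢ φ
      have hLxw : E {L} (supT mt x w) := mLe1 h x s w
      have hLsw : E {L} (supT mt s w) := mLe2 h x s w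
      -- {x,y} ⊢ φ and {x,z} ⊢ φ
      have hxyφ : E ({x, y} : Set Fm) φ := cutS hE ht1φ (pairM h hE x y w)
      have hxzφ : E ({x, z} : Set Fm) φ := cutS hE ht2φ (pairM h hE x z w)
      -- {x,z} ⊢ y ∨ φ
      have hxz_yφ : E ({x, z} : Set Fm) (supT mt y φ) :=
        cutS hE (leSupR h hE y φ) hxzφ
      -- A4 on {x,z} with target y∨φ
      have hK1 : E {mt (supT mt x (supT mt y φ)) z (supT mt y φ)} (supT mt y φ) :=
        a4Pair h hxz_yφ
      -- L ≤ the K1 term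
      have hL_yφ : E {L} (supT mt y φ) := by
        refine cut1 hE (leM h hE ?_ ?_) hK1
        · -- L ≤ (x ∨ (y∨φ)) ∨ (y∨φ)
          refine cut1 hE hLxw (supLe h ?_ ?_)
          · exact cut1 hE (leSupL h hE x (supT mt y φ))
              (leSupL h hE (supT mt x (supT mt y φ)) (supT mt y φ))
          · exact cut1 hE hwφ (cut1 hE (leSupR h hE y φ)
              (leSupR h hE (supT mt x (supT mt y φ)) (supT mt y φ)))
        · -- L ≤ z ∨ (y∨φ)
          refine cut1 hE hLsw (supLe h ?_ ?_)
          · -- s = y∨z ≤ z ∨ (y∨φ)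
            rw [hsup_s]
            refine supLe h ?_ ?_
            · exact cut1 hE (leSupL h hE y φ) (leSupR h hE z (supT mt y φ))
            · exact leSupL h hE z (supT mt y φ)
          · exact cut1 hE hwφ (cut1 hE (leSupR h hE y φ)
              (leSupR h hE z (supT mt y φ)))
      -- A4 on {x,y} with target φ
      have hK2 : E {mt (supT mt x φ) y φ} φ := a4Pair h hxyφ
      refine cut1 hE (leM h hE ?_ hL_yφ) hK2
      -- L ≤ (x ∨ φ) ∨ φ
      refine cut1 hE hLxw (supLe h ?_ ?_)
      · exact cut1 hE (leSupL h hE x φ) (leSupL h hE (supT mt x φ) φ)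
      · exact cut1 hE hwφ (leSupR h hE (supT mt x φ) φ)
    · -- φ ⊢ L : supT t1 t2 ≤ L
      rw [hsup_φ]
      have h1 : E {t1} L := by
        refine leM h hE (mLe1 h x y w) ?_
        refine cut1 hE (mLe2 h x y w) (supLe h ?_ ?_)
        · exact cut1 hE (leSupL h hE y z) (leSupL h hE s w)
        · exact leSupR h hE s w
      have h2 : E {t2} L := by
        refine leM h hE (mLe1 h x z w) ?_
        refine cut1 hE (mLe2 h x z w) (supLe h ?_ ?_)
        · exact cut1 hE (leSupR h hE y z) (leSupL h hE s w)
        · exact leSupR h hE s w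
      exact supLe h h1 h2
end
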